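/- arXiv:1905.00506 — 6 statements merged into one kernel-verified Lean document; each statement's English description precedes it below -/
import Mathlib

section
/- Let p be an odd prime, let γ, c₁ ∈ 𝔽̄_p[t] with c₁ ≠ 0 and deg(γ + c₁) > 0, and let φ = (x − γ)² − c₁ with adjusted post-critical orbit (cₙ). Let D ∈ 𝔽̄_p[t] be such that c₁ + D ≠ 0, and let n ∈ ℕ satisfy deg(γ + c₁) · 2^{n−2} > deg(c₁ + D). Then cₙ − D is not a square in 𝔽̄_p(t). -/
/-!
Write `φ = (x - γ)² - c₁` and `u = c_{n-1} - γ`, so that `c_n = u² - c₁`. The differences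
`c_{k+1} - γ` satisfy `c_{k+2} - γ = (c_{k+1} - γ)² - (γ + c₁)`, hence `deg u = deg (γ + c₁) · 2^(n-2)`.
A square root of `c_n - D` in `𝔽̄_p(t)` is a polynomial `r` (as `𝔽̄_p[t]` is integrally closed),
and then `(u - r)(u + r) = c₁ + D ≠ 0`. Since `2u = (u - r) + (u + r)` and `2` is invertible,
`deg u ≤ deg (u - r) + deg (u + r) = deg (c₁ + D)`, contradicting the degree hypothesis.
-/

open Polynomial

theorem IsIntegrallyClosed.exists_sq_eq_of_sq_eq_algebraMap {R K : Type*} [CommRing R]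
    [CommRing K] [Algebra R K] [IsFractionRing R K] [IsIntegrallyClosed R] {s : K} {f : R}
    (hs : s ^ 2 = algebraMap R K f) : ∃ r : R, r ^ 2 = f := by
  have hint : IsIntegral R (s ^ 2) := hs ▸ isIntegral_algebraMap
  obtain ⟨r, hr⟩ := exists_algebraMap_eq_of_isIntegral_pow two_pos hint
  exact ⟨r, IsFractionRing.injective R K (by rw [map_pow, hr, hs])⟩

theorem Polynomial.natDegree_le_natDegree_sq_sub_sq {R : Type*} [CommRing R] [IsDomain R]
    (h2 : (2 : R) ≠ 0) {u r : R[X]} (h : u ^ 2 - r ^ 2 ≠ 0) :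
    u.natDegree ≤ (u ^ 2 - r ^ 2).natDegree := by
  have hfactor : u ^ 2 - r ^ 2 = (u - r) * (u + r) := by ring
  rw [hfactor] at h ⊢
  have hsum : C 2 * u = (u - r) + (u + r) := by rw [C_ofNat]; ring
  calc u.natDegree = (C 2 * u).natDegree := (natDegree_C_mul h2).symm
    _ ≤ max (u - r).natDegree (u + r).natDegree := hsum ▸ natDegree_add_le _ _
    _ ≤ (u - r).natDegree + (u + r).natDegree := max_le_add_of_nonneg (Nat.zero_le _) (Nat.zero_le _)
    _ = ((u - r) * (u + r)).natDegree :=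
      (natDegree_mul (left_ne_zero_of_mul h) (right_ne_zero_of_mul h)).symm

section CriticalOrbit

variable {R : Type*} [CommRing R] (γ c₁ : R[X])

theorem iterate_succ_succ_sub_critical (k : ℕ) :
    (fun x => (x - γ) ^ 2 - c₁)^[k + 2] γ - γ
      = ((fun x => (x - γ) ^ 2 - c₁)^[k + 1] γ - γ) ^ 2 - (γ + c₁) := by
  rw [Function.iterate_succ_apply']
  ring

theorem natDegree_iterate_succ_sub_critical [IsDomain R] (hd : 0 < (γ + c₁).natDegree) (k : ℕ) :
    ((fun x => (x - γ) ^ 2 - c₁)^[k + 1] γ - γ).natDegree = (γ + c₁).natDegree * 2 ^ k := by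
  induction k with
  | zero =>
    have h : (fun x => (x - γ) ^ 2 - c₁)^[1] γ - γ = -(γ + c₁) := by
      rw [Function.iterate_one]; ring
    rw [h, natDegree_neg, pow_zero, mul_one]
  | succ k ih =>
    have hlt : (γ + c₁).natDegree
        < (((fun x => (x - γ) ^ 2 - c₁)^[k + 1] γ - γ) ^ 2).natDegree := by
      rw [natDegree_pow, ih]
      nlinarith [Nat.one_le_two_pow (n := k)]
    rw [iterate_succ_succ_sub_critical, natDegree_sub_eq_left_of_natDegree_lt hlt,
      natDegree_pow, ih, pow_succ]
    ring

end CriticalOrbit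

theorem stmt_1_general (p : ℕ) [Fact p.Prime] (hodd : p ≠ 2)
    (γ c₁ : Polynomial (AlgebraicClosure (ZMod p)))
    (hiso : 0 < (γ + c₁).natDegree)
    (c : ℕ → Polynomial (AlgebraicClosure (ZMod p)))
    (hcn : ∀ m, 2 ≤ m → c m = (fun x => (x - γ) ^ 2 - c₁)^[m] γ)
    (D : Polynomial (AlgebraicClosure (ZMod p))) (hD : c₁ + D ≠ 0)
    (n : ℕ) (hn : 2 ≤ n)
    (hbig : (c₁ + D).natDegree < (γ + c₁).natDegree * 2 ^ (n - 2)) :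
    ¬ ∃ s : RatFunc (AlgebraicClosure (ZMod p)),
        s ^ 2 = algebraMap (Polynomial (AlgebraicClosure (ZMod p)))
          (RatFunc (AlgebraicClosure (ZMod p))) (c n - D) := by
  rintro ⟨s, hs⟩
  obtain ⟨r, hr⟩ := IsIntegrallyClosed.exists_sq_eq_of_sq_eq_algebraMap hs
  obtain ⟨m, rfl⟩ : ∃ m, n = m + 2 := ⟨n - 2, by omega⟩
  set u := (fun x => (x - γ) ^ 2 - c₁)^[m + 1] γ - γ
  have hdiff : u ^ 2 - r ^ 2 = c₁ + D := by
    rw [hr, hcn _ hn, Function.iterate_succ_apply']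
    ring
  have h2 : (2 : AlgebraicClosure (ZMod p)) ≠ 0 :=
    Ring.two_ne_zero (by rwa [ringChar.eq (AlgebraicClosure (ZMod p)) p])
  have hle := natDegree_le_natDegree_sq_sub_sq h2 (hdiff ▸ hD)
  rw [hdiff, natDegree_iterate_succ_sub_critical γ c₁ hiso] at hle
  rw [Nat.add_sub_cancel] at hbig
  omega

/-- Let `p` be an odd prime, `γ, c₁ ∈ 𝔽̄_p[t]` with `c₁ ≠ 0` and
`deg (γ + c₁) > 0`, and `φ = (x - γ)² - c₁` with adjusted post-critical orbit `(cₙ)`.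
If `D ∈ 𝔽̄_p[t]` satisfies `c₁ + D ≠ 0` and `n` satisfies
`deg (γ + c₁) · 2^(n-2) > deg (c₁ + D)`, then `cₙ - D` is not a square in `𝔽̄_p(t)`. -/
theorem stmt_1 (p : ℕ) [Fact p.Prime] (hodd : p ≠ 2)
    (γ c₁ : Polynomial (AlgebraicClosure (ZMod p)))
    (hc₁ : c₁ ≠ 0) (hiso : 0 < (γ + c₁).natDegree)
    (c : ℕ → Polynomial (AlgebraicClosure (ZMod p)))
    (hc1 : c 1 = c₁)
    (hcn : ∀ m, 2 ≤ m → c m = (fun x => (x - γ) ^ 2 - c₁)^[m] γ)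
    (D : Polynomial (AlgebraicClosure (ZMod p))) (hD : c₁ + D ≠ 0)
    (n : ℕ) (hn : 2 ≤ n)
    (hbig : (c₁ + D).natDegree < (γ + c₁).natDegree * 2 ^ (n - 2)) :
    ¬ ∃ s : RatFunc (AlgebraicClosure (ZMod p)),
        s ^ 2 = algebraMap (Polynomial (AlgebraicClosure (ZMod p)))
          (RatFunc (AlgebraicClosure (ZMod p))) (c n - D) :=
  stmt_1_general p hodd γ c₁ hiso c hcn D hD n hn hbig
end

section
/- Let φ = (x−γ)² − c₁ ∈ 𝔽̄_p[t][x] with c₁ ≠ 0, c₁ not a square in 𝔽̄_p[t], and deg(γ+c₁) > 0 (p odd). Fix n ≥ 3 with deg(γ+c₁)·2^{n−3} > max{deg γ, deg c₁}, set α₁ = γ − √c₁, α₂ = γ + √c₁ (in a quadratic extension K = 𝔽̄_p(t, √c₁)), and ξᵢ = √(c_{n−1} − αᵢ). Then neither ξ₁ nor ξ₂ lies in K. -/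
/-!
Write `A = c_{n-1} - γ`, so that `ξᵢ² = A ± √c₁`. Since `c₁` is not a square, `1, √c₁` are
linearly independent over `𝔽̄_p(t)`, so `ξᵢ = a + b√c₁` would give `A = a² + b²c₁`, `±1 = 2ab`,
hence `c_n = A² - c₁ = (a² - b²c₁)²`. But `c_n` is not a square in `𝔽̄_p[t]` (hence, by Gauss, not
in `𝔽̄_p(t)`): `c₁ = (A - y)(A + y)` would force `deg A ≤ deg c₁`, whereas
`deg (φ^[k+1] γ - γ) = deg (γ + c₁) · 2^k` grows past `deg c₁`.
-/

open Polynomial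

section SquareRoot

variable {F Ω : Type*} [Field F] [Field Ω] [Algebra F Ω] {s : Ω} {d : F}

theorem exists_eq_add_mul_of_mem_adjoin (hs : s ^ 2 = algebraMap F Ω d) {x : Ω}
    (hx : x ∈ IntermediateField.adjoin F {s}) :
    ∃ a b : F, x = algebraMap F Ω a + algebraMap F Ω b * s := by
  have hmonic : (X ^ 2 - C d).Monic := monic_X_pow_sub_C d two_ne_zero
  have hroot : aeval s (X ^ 2 - C d) = 0 := by simp [hs]
  have hint : IsIntegral F s := ⟨_, hmonic, by rwa [← aeval_def]⟩
  rw [← IntermediateField.mem_toSubalgebra,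
    IntermediateField.adjoin_simple_toSubalgebra_of_isAlgebraic hint.isAlgebraic,
    Algebra.adjoin_singleton_eq_range_aeval] at hx
  obtain ⟨P, rfl⟩ := hx
  have hdeg : (P %ₘ (X ^ 2 - C d)).degree ≤ 1 := by
    have := degree_modByMonic_lt P hmonic
    rw [degree_X_pow_sub_C two_pos] at this
    exact Order.le_of_lt_succ (by exact_mod_cast this)
  refine ⟨(P %ₘ (X ^ 2 - C d)).coeff 0, (P %ₘ (X ^ 2 - C d)).coeff 1, ?_⟩
  rw [AlgHom.toRingHom_eq_coe, RingHom.coe_coe, ← aeval_modByMonic_eq_self_of_root hroot]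
  conv_lhs => rw [eq_X_add_C_of_degree_le_one hdeg]
  simp only [map_add, map_mul, aeval_C, aeval_X]
  ring

theorem eq_and_eq_of_add_mul_eq_add_mul (hs : s ^ 2 = algebraMap F Ω d)
    (hd : ¬ ∃ x : F, x ^ 2 = d) {a b a' b' : F}
    (h : algebraMap F Ω a + algebraMap F Ω b * s = algebraMap F Ω a' + algebraMap F Ω b' * s) :
    a = a' ∧ b = b' := by
  by_cases hb : b = b'
  · subst hb
    exact ⟨(algebraMap F Ω).injective (add_right_cancel h), rfl⟩
  · refine absurd ⟨(a' - a) / (b - b'), (algebraMap F Ω).injective ?_⟩ hd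
    have hs' : s = algebraMap F Ω ((a' - a) / (b - b')) := by
      rw [map_div₀, eq_div_iff (by simpa [sub_eq_zero] using hb)]
      simp only [map_sub]
      linear_combination h
    rw [map_pow, ← hs', hs]

theorem notMem_adjoin_of_sq_eq_add_mul (hs : s ^ 2 = algebraMap F Ω d)
    (hd : ¬ ∃ x : F, x ^ 2 = d) {A B : F} (hN : ¬ ∃ x : F, x ^ 2 = A ^ 2 - B ^ 2 * d) {ξ : Ω}
    (hξ : ξ ^ 2 = algebraMap F Ω A + algebraMap F Ω B * s) :
    ξ ∉ IntermediateField.adjoin F {s} := by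
  intro hmem
  obtain ⟨a, b, rfl⟩ := exists_eq_add_mul_of_mem_adjoin hs hmem
  have hsq : algebraMap F Ω (a ^ 2 + b ^ 2 * d) + algebraMap F Ω (2 * a * b) * s =
      algebraMap F Ω A + algebraMap F Ω B * s := by
    rw [← hξ]
    simp only [map_add, map_mul, map_pow, map_ofNat, ← hs]
    ring
  obtain ⟨rfl, rfl⟩ := eq_and_eq_of_add_mul_eq_add_mul hs hd hsq
  exact hN ⟨a ^ 2 - b ^ 2 * d, by ring⟩

end SquareRoot

theorem not_exists_sq_algebraMap_of_not_exists_sq {R K : Type*} [CommRing R] [IsDomain R]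
    [IsIntegrallyClosed R] [Field K] [Algebra R K] [IsFractionRing R K] {q : R}
    (h : ¬ ∃ y : R, y ^ 2 = q) : ¬ ∃ x : K, x ^ 2 = algebraMap R K q := by
  rintro ⟨x, hx⟩
  have hint : IsIntegral R x := ⟨X ^ 2 - C q, monic_X_pow_sub_C q two_ne_zero, by simp [hx]⟩
  obtain ⟨y, rfl⟩ := IsIntegrallyClosed.isIntegral_iff.mp hint
  exact h ⟨y, IsFractionRing.injective R K (by rw [map_pow, hx])⟩

section Orbit

variable {R : Type*} [CommRing R] [NoZeroDivisors R] {γ c : R[X]}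

theorem natDegree_iterate_sub_self (h : 0 < (γ + c).natDegree) (k : ℕ) :
    ((fun x => (x - γ) ^ 2 - c)^[k + 1] γ - γ).natDegree = (γ + c).natDegree * 2 ^ k := by
  induction k with
  | zero =>
    rw [Function.iterate_one, show (γ - γ) ^ 2 - c - γ = -(γ + c) by ring, natDegree_neg]
    simp
  | succ k ih =>
    set e := (fun x => (x - γ) ^ 2 - c)^[k + 1] γ - γ
    have hstep : (fun x => (x - γ) ^ 2 - c)^[k + 2] γ - γ = e ^ 2 - (γ + c) := by
      rw [Function.iterate_succ_apply']
      ring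
    have hlt : (γ + c).natDegree < (e ^ 2).natDegree := by
      rw [natDegree_pow, ih]
      nlinarith [Nat.one_le_two_pow (n := k)]
    rw [hstep, natDegree_sub_eq_left_of_natDegree_lt hlt, natDegree_pow, ih, pow_succ]
    ring

end Orbit

theorem natDegree_le_of_sq_sub_sq_eq {K : Type*} [Field K] (h2 : (2 : K) ≠ 0) {e y c : K[X]}
    (hc : c ≠ 0) (h : e ^ 2 - y ^ 2 = c) : e.natDegree ≤ c.natDegree := by
  have hdvd₁ : e - y ∣ c := ⟨e + y, by rw [← h]; ring⟩
  have hdvd₂ : e + y ∣ c := ⟨e - y, by rw [← h]; ring⟩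
  calc e.natDegree = (C 2 * e).natDegree := (natDegree_C_mul h2).symm
    _ = ((e - y) + (e + y)).natDegree := by congr 1; rw [C_ofNat]; ring
    _ ≤ max (e - y).natDegree (e + y).natDegree := natDegree_add_le _ _
    _ ≤ c.natDegree := max_le (natDegree_le_of_dvd hdvd₁ hc) (natDegree_le_of_dvd hdvd₂ hc)

theorem not_exists_sq_iterate {K : Type*} [Field K] (h2 : (2 : K) ≠ 0) {γ c : K[X]}
    (hc : c ≠ 0) {k : ℕ} (hk : c.natDegree < (γ + c).natDegree * 2 ^ k) :
    ¬ ∃ y, y ^ 2 = (fun x => (x - γ) ^ 2 - c)^[k + 2] γ := by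
  rintro ⟨y, hy⟩
  have hpos : 0 < (γ + c).natDegree := Nat.pos_of_mul_pos_right (hk.trans_le' (Nat.zero_le _))
  have hsq : ((fun x => (x - γ) ^ 2 - c)^[k + 1] γ - γ) ^ 2 - y ^ 2 = c := by
    rw [hy, Function.iterate_succ_apply' _ (k + 1)]
    ring
  have := natDegree_le_of_sq_sub_sq_eq h2 hc hsq
  rw [natDegree_iterate_sub_self hpos] at this
  omega

theorem stmt_4_general (p : ℕ) [Fact p.Prime] (hodd : p ≠ 2)
    (γ c₁ : Polynomial (AlgebraicClosure (ZMod p)))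
    (hc₁ : c₁ ≠ 0)
    (hnsq : ¬ ∃ y : Polynomial (AlgebraicClosure (ZMod p)), y ^ 2 = c₁)
    (c : ℕ → Polynomial (AlgebraicClosure (ZMod p)))
    (hcn : ∀ m, 2 ≤ m → c m = (fun x => (x - γ) ^ 2 - c₁)^[m] γ)
    (n : ℕ) (hn : 3 ≤ n)
    (hbig : max γ.natDegree c₁.natDegree < (γ + c₁).natDegree * 2 ^ (n - 3))
    -- the embedding 𝔽̄_p[t] → 𝔽̄_p(t) → Ω
    (j : Polynomial (AlgebraicClosure (ZMod p)) →+*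
      AlgebraicClosure (RatFunc (AlgebraicClosure (ZMod p))))
    (hj : j = (algebraMap (RatFunc (AlgebraicClosure (ZMod p)))
        (AlgebraicClosure (RatFunc (AlgebraicClosure (ZMod p))))).comp
      (algebraMap (Polynomial (AlgebraicClosure (ZMod p)))
        (RatFunc (AlgebraicClosure (ZMod p)))))
    (s : AlgebraicClosure (RatFunc (AlgebraicClosure (ZMod p))))
    (hs : s ^ 2 = j c₁)
    (ξ₁ ξ₂ : AlgebraicClosure (RatFunc (AlgebraicClosure (ZMod p))))
    (hξ₁ : ξ₁ ^ 2 = j (c (n - 1)) - (j γ - s))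
    (hξ₂ : ξ₂ ^ 2 = j (c (n - 1)) - (j γ + s)) :
    ξ₁ ∉ IntermediateField.adjoin (RatFunc (AlgebraicClosure (ZMod p))) {s} ∧
    ξ₂ ∉ IntermediateField.adjoin (RatFunc (AlgebraicClosure (ZMod p))) {s} := by
  obtain ⟨m, rfl⟩ : ∃ m, n = m + 3 := ⟨n - 3, by omega⟩
  rw [Nat.add_sub_cancel] at hbig
  rw [show m + 3 - 1 = m + 2 by omega] at hξ₁ hξ₂
  have h2 : (2 : AlgebraicClosure (ZMod p)) ≠ 0 := Ring.two_ne_zero (by rwa [ringChar.eq _ p])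
  have hj' (q : Polynomial (AlgebraicClosure (ZMod p))) :
      j q = algebraMap _ _ (algebraMap _ (RatFunc (AlgebraicClosure (ZMod p))) q) := by
    rw [hj]; rfl
  have hd := not_exists_sq_algebraMap_of_not_exists_sq
    (K := RatFunc (AlgebraicClosure (ZMod p))) hnsq
  have hN (B : RatFunc (AlgebraicClosure (ZMod p))) (hB : B ^ 2 = 1) :
      ¬ ∃ x, x ^ 2 = algebraMap _ _ (c (m + 2) - γ) ^ 2 - B ^ 2 * algebraMap _ _ c₁ := by
    have hk : c₁.natDegree < (γ + c₁).natDegree * 2 ^ (m + 1) :=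
      ((le_max_right _ _).trans_lt hbig).trans_le
        (Nat.mul_le_mul_left _ (Nat.pow_le_pow_right two_pos m.le_succ))
    have := not_exists_sq_algebraMap_of_not_exists_sq
      (K := RatFunc (AlgebraicClosure (ZMod p))) (not_exists_sq_iterate h2 hc₁ hk)
    rw [hB, one_mul]
    rwa [Function.iterate_succ_apply', ← hcn _ le_add_self, map_sub, map_pow] at this
  refine ⟨notMem_adjoin_of_sq_eq_add_mul (B := 1) ?_ hd (hN 1 (one_pow 2)) ?_,
    notMem_adjoin_of_sq_eq_add_mul (B := -1) ?_ hd (hN (-1) (by norm_num)) ?_⟩ <;>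
  simp only [hs, hξ₁, hξ₂, hj', map_sub, map_one, map_neg] <;> ring

/-- Let `φ = (x - γ)² - c₁ ∈ 𝔽̄_p[t][x]` (p odd) with `c₁ ≠ 0`, `c₁` not a
square in `𝔽̄_p[t]`, and `deg (γ + c₁) > 0`.  Fix `n ≥ 3` with
`deg (γ + c₁) · 2^(n-3) > max (deg γ) (deg c₁)`, set `α₁ = γ - √c₁`, `α₂ = γ + √c₁` (inside
`K = 𝔽̄_p(t, √c₁)` sitting in an algebraic closure `Ω` of `𝔽̄_p(t)`), and let
`ξᵢ = √(c_{n-1} - αᵢ) ∈ Ω`.  Then neither `ξ₁` nor `ξ₂` lies in `K`. -/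
theorem stmt_4 (p : ℕ) [Fact p.Prime] (hodd : p ≠ 2)
    (γ c₁ : Polynomial (AlgebraicClosure (ZMod p)))
    (hc₁ : c₁ ≠ 0)
    (hnsq : ¬ ∃ y : Polynomial (AlgebraicClosure (ZMod p)), y ^ 2 = c₁)
    (hiso : 0 < (γ + c₁).natDegree)
    (c : ℕ → Polynomial (AlgebraicClosure (ZMod p)))
    (hc1 : c 1 = c₁)
    (hcn : ∀ m, 2 ≤ m → c m = (fun x => (x - γ) ^ 2 - c₁)^[m] γ)
    (n : ℕ) (hn : 3 ≤ n)
    (hbig : max γ.natDegree c₁.natDegree < (γ + c₁).natDegree * 2 ^ (n - 3))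
    -- the embedding 𝔽̄_p[t] → 𝔽̄_p(t) → Ω
    (j : Polynomial (AlgebraicClosure (ZMod p)) →+*
      AlgebraicClosure (RatFunc (AlgebraicClosure (ZMod p))))
    (hj : j = (algebraMap (RatFunc (AlgebraicClosure (ZMod p)))
        (AlgebraicClosure (RatFunc (AlgebraicClosure (ZMod p))))).comp
      (algebraMap (Polynomial (AlgebraicClosure (ZMod p)))
        (RatFunc (AlgebraicClosure (ZMod p)))))
    (s : AlgebraicClosure (RatFunc (AlgebraicClosure (ZMod p))))
    (hs : s ^ 2 = j c₁)
    (ξ₁ ξ₂ : AlgebraicClosure (RatFunc (AlgebraicClosure (ZMod p))))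
    (hξ₁ : ξ₁ ^ 2 = j (c (n - 1)) - (j γ - s))
    (hξ₂ : ξ₂ ^ 2 = j (c (n - 1)) - (j γ + s)) :
    ξ₁ ∉ IntermediateField.adjoin (RatFunc (AlgebraicClosure (ZMod p))) {s} ∧
    ξ₂ ∉ IntermediateField.adjoin (RatFunc (AlgebraicClosure (ZMod p))) {s} :=
  stmt_4_general p hodd γ c₁ hc₁ hnsq c hcn n hn hbig j hj s hs ξ₁ ξ₂ hξ₁ hξ₂
end

section
/- Let k be a field and φ ∈ k[t][x] a monic quadratic polynomial with critical point γ and adjusted post-critical orbit (cₙ) (c₁ = −φ(γ), cₘ = φ⁽ᵐ⁾(γ) for m ≥ 2). Let r be an irreducible element of k[t] and suppose r divides cₙ and r divides cₘ for some m with n/2 < m < n. Then r divides φ⁽ⁿ⁻ᵐ⁾(0). -/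
open Polynomial

/-! Since `a - b ∣ φ a - φ b` for the quadratic map `φ`, and hence for all its iterates, `r ∣ c m`
gives `φ⁽ⁿ⁻ᵐ⁾(0) ≡ φ⁽ⁿ⁻ᵐ⁾(c m) = c n ≡ 0 mod r`. -/

section SubDvd

variable {R : Type*} [CommRing R]

theorem sub_dvd_iterate_sub {f : R → R} (hf : ∀ a b, a - b ∣ f a - f b) (j : ℕ) (a b : R) :
    a - b ∣ f^[j] a - f^[j] b := by
  induction j with
  | zero => simp
  | succ j ih =>
    rw [Function.iterate_succ_apply', Function.iterate_succ_apply']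
    exact ih.trans (hf _ _)

theorem sub_dvd_sq_sub_sub_sq_sub (γ c a b : R) :
    a - b ∣ ((a - γ) ^ 2 - c) - ((b - γ) ^ 2 - c) := by
  simpa only [sub_sub_sub_cancel_right] using sub_dvd_pow_sub_pow (a - γ) (b - γ) 2

end SubDvd

theorem stmt_6_general {k : Type*} [Field k] (γ c₁ : Polynomial k)
    (c : ℕ → Polynomial k)
    (hcn : ∀ m, 2 ≤ m → c m = (fun x => (x - γ) ^ 2 - c₁)^[m] γ)
    (r : Polynomial k)
    (n m : ℕ) (hm : m < n) (hhalf : n < 2 * m)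
    (hrn : r ∣ c n) (hrm : r ∣ c m) :
    r ∣ (fun x => (x - γ) ^ 2 - c₁)^[n - m] 0 := by
  set φ : k[X] → k[X] := fun x => (x - γ) ^ 2 - c₁
  have horbit : φ^[n - m] (c m) = c n := by
    rw [hcn m (by omega), hcn n (by omega), ← Function.iterate_add_apply, Nat.sub_add_cancel hm.le]
  have hcong : r ∣ φ^[n - m] 0 - φ^[n - m] (c m) :=
    (zero_sub (c m) ▸ hrm.neg_right).trans
      (sub_dvd_iterate_sub (sub_dvd_sq_sub_sub_sq_sub γ c₁) _ _ _)
  simpa only [horbit, sub_add_cancel] using dvd_add hcong hrn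

/-- Let `φ = (x - γ)² - c₁ ∈ k[t][x]` be monic quadratic with critical point `γ`
and adjusted post-critical orbit `(cₙ)` (`c₁ = -φ(γ)`, `cₘ = φ⁽ᵐ⁾(γ)` for `m ≥ 2`).
If `r ∈ k[t]` is irreducible, `r ∣ cₙ` and `r ∣ cₘ` for some `m` with `n/2 < m < n`,
then `r ∣ φ⁽ⁿ⁻ᵐ⁾(0)`. -/
theorem stmt_6 {k : Type*} [Field k] (γ c₁ : Polynomial k)
    (c : ℕ → Polynomial k)
    (hc1 : c 1 = c₁)
    (hcn : ∀ m, 2 ≤ m → c m = (fun x => (x - γ) ^ 2 - c₁)^[m] γ)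
    (r : Polynomial k) (hr : Irreducible r)
    (n m : ℕ) (hm : m < n) (hhalf : n < 2 * m)
    (hrn : r ∣ c n) (hrm : r ∣ c m) :
    r ∣ (fun x => (x - γ) ^ 2 - c₁)^[n - m] 0 :=
  stmt_6_general γ c₁ c hcn r n m hm hhalf hrn hrm
end

section
/- Let k be a field of characteristic ≠ 2, φ ∈ k[t][x] a monic quadratic polynomial with all iterates separable, n ≥ 1 such that φ⁽ⁿ⁾ is irreducible over k^sep(t). Suppose c_{n+1} (the (n+1)-st term of the adjusted post-critical orbit) has a primitive prime divisor f ∈ k^sep[t] appearing to odd multiplicity, i.e., c_{n+1} = f^{2r+1}·g with f irreducible, gcd(f,g)=1, and f ∤ cᵢ for all i ≤ n with cᵢ ≠ 0. Then c_{n+1} is not a square in K_n, the splitting field of φ⁽ⁿ⁾ over k^sep(t). -/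
/-!
Let `B` be the integral closure of `k^sep[t]` in `K_n` and `Q` a prime of `B` above `f`.
If `c_{n+1} = s²` in `K_n`, then `(s)² = (f)^(2r+1) (g)` as ideals of `B` with `Q ∤ (g)`, so the
ramification index of `Q` over `f` is even and `Q² ∣ fB`.

On the other hand `f` is unramified. Two roots of `φ⁽ⁿ⁾` that collide modulo `Q` give a double
root of `φ⁽ⁿ⁾ mod Q`; as `(φ⁽ⁿ⁾)' = 2ⁿ ∏_{i<n} (φ⁽ⁱ⁾ - γ)`, the critical orbit then returns to
`0` modulo `f`, i.e. `f ∣ φ⁽ᵐ⁾(γ) = ±c_m` for some `1 ≤ m ≤ n`. So the roots `xᵢ` stay distinct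
modulo `Q`, and since the residue field is infinite, a generic `θ = ∑ μ^i xᵢ` with `μ ∈ k^sep[t]`
satisfies `θ ≢ σθ (mod Q)` for every `σ ≠ 1` in the Galois group. Such a `θ` generates `K_n`, and
`m_θ'(θ) = ∏_{σ ≠ 1} (θ - σθ)` is an element of the different ideal outside `Q`; hence `Q` does
not divide the different, i.e. `Q² ∤ fB`.
-/

open Polynomial

/-- The `n`-th iterate `φ⁽ⁿ⁾` of a polynomial `φ` (in the variable `x`), as a polynomial. -/
noncomputable def polyIterate {R : Type*} [CommRing R] (φ : Polynomial R) (n : ℕ) :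
    Polynomial R :=
  (fun g => g.comp φ)^[n] X

section PolyIterate

variable {R S : Type*} [CommRing R] [CommRing S]

lemma polyIterate_zero (φ : R[X]) : polyIterate φ 0 = X := rfl

lemma polyIterate_succ (φ : R[X]) (n : ℕ) :
    polyIterate φ (n + 1) = (polyIterate φ n).comp φ :=
  Function.iterate_succ_apply' _ _ _

lemma polyIterate_add (φ : R[X]) (a b : ℕ) :
    polyIterate φ (a + b) = (polyIterate φ a).comp (polyIterate φ b) := by
  induction b with
  | zero => simp [polyIterate_zero]
  | succ b ih => rw [← add_assoc, polyIterate_succ, polyIterate_succ, ih, comp_assoc]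

lemma polyIterate_succ' (φ : R[X]) (n : ℕ) :
    polyIterate φ (n + 1) = φ.comp (polyIterate φ n) := by
  rw [add_comm, polyIterate_add, polyIterate_succ, polyIterate_zero, X_comp]

lemma polyIterate_map (f : R →+* S) (φ : R[X]) (n : ℕ) :
    (polyIterate φ n).map f = polyIterate (φ.map f) n := by
  induction n with
  | zero => simp [polyIterate_zero]
  | succ n ih => rw [polyIterate_succ, polyIterate_succ, Polynomial.map_comp, ih]

lemma eval_polyIterate (φ : R[X]) (n : ℕ) (a : R) :
    (polyIterate φ n).eval a = (fun x => φ.eval x)^[n] a := by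
  induction n generalizing a with
  | zero => simp [polyIterate_zero]
  | succ n ih => rw [polyIterate_succ, eval_comp, ih, Function.iterate_succ_apply]

lemma derivative_polyIterate (φ : R[X]) (n : ℕ) :
    derivative (polyIterate φ n)
      = ∏ i ∈ Finset.range n, (derivative φ).comp (polyIterate φ i) := by
  induction n with
  | zero => simp [polyIterate_zero]
  | succ n ih => rw [polyIterate_succ', derivative_comp, ih, Finset.prod_range_succ, mul_comm]

lemma polyIterate_monic [Nontrivial R] {φ : R[X]} (hφ : φ.Monic) (hdeg : φ.natDegree ≠ 0)
    (n : ℕ) : (polyIterate φ n).Monic := by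
  induction n with
  | zero => exact monic_X
  | succ n ih => rw [polyIterate_succ]; exact ih.comp hφ hdeg

end PolyIterate

section Quadratic

variable {R : Type*} [CommRing R]

lemma monic_X_sub_C_sq_sub_C [Nontrivial R] (γ c : R) : ((X - C γ) ^ 2 - C c).Monic := by
  monicity!

lemma natDegree_X_sub_C_sq_sub_C [Nontrivial R] (γ c : R) :
    ((X - C γ) ^ 2 - C c).natDegree = 2 := by
  compute_degree!

lemma derivative_X_sub_C_sq_sub_C (γ c : R) :
    derivative ((X - C γ) ^ 2 - C c) = C 2 * (X - C γ) := by
  rw [derivative_sub, derivative_C, sub_zero, derivative_X_sub_C_sq]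

end Quadratic

lemma isRoot_derivative_map_mk_of_sub_mem {R : Type*} [CommRing R] [IsDomain R] {p : R[X]}
    {x y : R} (hx : p.IsRoot x) (hy : p.IsRoot y) (hxy : x ≠ y) (I : Ideal R) (h : x - y ∈ I) :
    (derivative (p.map (Ideal.Quotient.mk I))).IsRoot (Ideal.Quotient.mk I x) := by
  obtain ⟨q, rfl⟩ := dvd_iff_isRoot.mpr hx
  have hqy : q.IsRoot y := by
    simpa [IsRoot, sub_ne_zero.mpr hxy.symm] using hy
  obtain ⟨q', rfl⟩ := dvd_iff_isRoot.mpr hqy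
  have hmk : Ideal.Quotient.mk I y = Ideal.Quotient.mk I x :=
    (Ideal.Quotient.mk_eq_mk_iff_sub_mem x y).mpr h |>.symm
  simp [IsRoot, derivative_mul, hmk]

section QuadraticDynamics

variable {R S : Type*} [CommRing R] (γ c : R)

lemma eval_derivative_polyIterate_quadratic (n : ℕ) (z : R) :
    (derivative (polyIterate ((X - C γ) ^ 2 - C c) n)).eval z
      = 2 ^ n * ∏ i ∈ Finset.range n, ((polyIterate ((X - C γ) ^ 2 - C c) i).eval z - γ) := by
  simp only [derivative_polyIterate, derivative_X_sub_C_sq_sub_C, eval_prod, eval_comp, eval_mul,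
    eval_C, eval_sub, eval_X, Finset.prod_mul_distrib, Finset.prod_const, Finset.card_range]

lemma isRoot_derivative_polyIterate_quadratic {m : ℕ} (hm : 1 ≤ m) :
    (derivative (polyIterate ((X - C γ) ^ 2 - C c) m)).IsRoot γ := by
  rw [IsRoot, eval_derivative_polyIterate_quadratic]
  exact mul_eq_zero_of_right _ <| Finset.prod_eq_zero (Finset.mem_range.mpr hm)
    (by simp [polyIterate_zero])

lemma exists_isRoot_polyIterate_of_isRoot_derivative [IsDomain R] (h2 : (2 : R) ≠ 0)
    {n : ℕ} {z : R} (h0 : (polyIterate ((X - C γ) ^ 2 - C c) n).IsRoot z)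
    (h1 : (derivative (polyIterate ((X - C γ) ^ 2 - C c) n)).IsRoot z) :
    ∃ m, 1 ≤ m ∧ m ≤ n ∧ (polyIterate ((X - C γ) ^ 2 - C c) m).IsRoot γ := by
  rw [IsRoot, eval_derivative_polyIterate_quadratic] at h1
  obtain ⟨i, hi, hiγ⟩ := Finset.prod_eq_zero_iff.mp ((mul_eq_zero.mp h1).resolve_left
    (pow_ne_zero n h2))
  have hin := Finset.mem_range.mp hi
  refine ⟨n - i, by omega, by omega, ?_⟩
  rw [sub_eq_zero] at hiγ
  calc (polyIterate _ (n - i)).eval γ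
      = ((polyIterate _ (n - i)).comp (polyIterate _ i)).eval z := by rw [eval_comp, hiγ]
    _ = 0 := by rwa [← polyIterate_add, Nat.sub_add_cancel hin.le]

lemma eval_polyIterate_quadratic_ne_zero_of_separable [CommRing S] [Nontrivial S] (f : R →+* S)
    {m : ℕ} (hm : 1 ≤ m) (hsep : ((polyIterate ((X - C γ) ^ 2 - C c) m).map f).Separable) :
    (polyIterate ((X - C γ) ^ 2 - C c) m).eval γ ≠ 0 := by
  intro h0
  refine hsep.eval₂_derivative_ne_zero (RingHom.id S) (x := f γ) ?_ ?_
  · rw [eval₂_id, eval_map_apply, h0, map_zero]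
  · rw [eval₂_id, derivative_map, eval_map_apply, isRoot_derivative_polyIterate_quadratic γ c hm,
      map_zero]

lemma eq_of_sub_mem_of_isRoot_polyIterate [CommRing S] [IsDomain S] [Algebra R S] (Q : Ideal S)
    [Q.IsPrime] (h2 : (2 : S) ∉ Q) {n : ℕ}
    (hcrit : ∀ m, 1 ≤ m → m ≤ n →
      algebraMap R S ((polyIterate ((X - C γ) ^ 2 - C c) m).eval γ) ∉ Q)
    {x y : S} (hx : ((polyIterate ((X - C γ) ^ 2 - C c) n).map (algebraMap R S)).IsRoot x)
    (hy : ((polyIterate ((X - C γ) ^ 2 - C c) n).map (algebraMap R S)).IsRoot y)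
    (hxy : x - y ∈ Q) : x = y := by
  by_contra hne
  set χ := (Ideal.Quotient.mk Q).comp (algebraMap R S)
  have hmap : ∀ m, (polyIterate ((X - C γ) ^ 2 - C c) m).map χ
      = polyIterate ((X - C (χ γ)) ^ 2 - C (χ c)) m := fun m => by
    rw [polyIterate_map]; simp
  have h1 := isRoot_derivative_map_mk_of_sub_mem hx hy hne Q hxy
  rw [Polynomial.map_map] at h1
  have h0 : ((polyIterate ((X - C γ) ^ 2 - C c) n).map χ).IsRoot (Ideal.Quotient.mk Q x) := by
    rw [IsRoot, ← Polynomial.map_map, eval_map_apply, hx.eq_zero, map_zero]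
  rw [hmap] at h0 h1
  obtain ⟨m, hm1, hmn, hm⟩ := exists_isRoot_polyIterate_of_isRoot_derivative (χ γ) (χ c)
    (by rwa [← map_ofNat (Ideal.Quotient.mk Q) 2, Ne, Ideal.Quotient.eq_zero_iff_mem]) h0 h1
  rw [← hmap, IsRoot, eval_map_apply] at hm
  exact hcrit m hm1 hmn (Ideal.Quotient.eq_zero_iff_mem.mp hm)

end QuadraticDynamics

lemma sq_dvd_of_mul_self_eq_pow_mul {M : Type*} [CommMonoidWithZero M] [IsCancelMulZero M]
    {q p i j : M} (hq : Prime q) (hqp : q ∣ p) (hqj : ¬ q ∣ j) {r : ℕ}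
    (h : i * i = p ^ (2 * r + 1) * j) : q ^ 2 ∣ p := by
  by_contra hsq
  obtain ⟨p', rfl⟩ := hqp
  have hqp' : ¬ q ∣ p' := fun ⟨u, hu⟩ => hsq ⟨u, by rw [hu, ← mul_assoc, sq]⟩
  have hqu : ¬ q ∣ p' ^ (2 * r + 1) * j := fun hd =>
    ((hq.dvd_or_dvd hd).elim (fun h' => hqp' (hq.dvd_of_dvd_pow h')) hqj)
  have hval := congrArg (emultiplicity q) h
  rw [mul_pow, mul_assoc, emultiplicity_mul hq, emultiplicity_mul hq,
    emultiplicity_pow_self_of_prime hq, emultiplicity_eq_zero.mpr hqu, add_zero] at hval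
  generalize emultiplicity q i = e at hval
  induction e using ENat.recTopCoe with
  | top => exact ENat.top_ne_natCast _ (by exact_mod_cast hval)
  | coe m => norm_cast at hval; omega

lemma sq_dvd_span_of_mul_self_eq {B : Type*} [CommRing B] [IsDedekindDomain B] {Q : Ideal B}
    [Q.IsPrime] (hQ : Q ≠ ⊥) {f g s : B} (hf : f ∈ Q) (hg : g ∉ Q) {r : ℕ}
    (hs : s * s = f ^ (2 * r + 1) * g) : Q ^ 2 ∣ Ideal.span {f} :=
  sq_dvd_of_mul_self_eq_pow_mul (Ideal.prime_of_isPrime hQ ‹_›)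
    (Ideal.dvd_span_singleton.mpr hf) (mt Ideal.dvd_span_singleton.mp hg)
    (i := Ideal.span {s}) (by
      rw [Ideal.span_singleton_mul_span_singleton, Ideal.span_singleton_pow,
        Ideal.span_singleton_mul_span_singleton, hs])

lemma infinite_of_isSepClosed (k : Type*) [Field k] [IsSepClosed k] : Infinite k := by
  refine Infinite.of_not_fintype fun _ => ?_
  set f : k[X] := X ^ (Fintype.card k + 1) - C 1
  -- separable as `(#k + 1 : k) = 1`, so `f` has `#k + 1` distinct roots in `k`
  have hf : f.Separable := separable_X_pow_sub_C 1 (by simp) one_ne_zero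
  have hcard := card_rootSet_eq_natDegree (K := k) hf
    (by rw [Algebra.algebraMap_self, Polynomial.map_id]; exact IsSepClosed.splits_of_separable _ hf)
  rw [natDegree_X_pow_sub_C] at hcard
  have := Fintype.card_le_of_injective (fun x : f.rootSet k => (x : k)) Subtype.coe_injective
  omega

section GaloisConjugates

variable {K L : Type*} [Field K] [Field L] [Algebra K L] [FiniteDimensional K L] [IsGalois K L]
  {x : L}

lemma minpoly_map_eq_prod_of_forall_eq_one (hx : ∀ σ : Gal(L/K), σ x = x → σ = 1) :
    (minpoly K x).map (algebraMap K L) = ∏ σ : Gal(L/K), (X - C (σ x)) := by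
  classical
  have hinj : Function.Injective fun σ : Gal(L/K) => σ x := fun σ τ h =>
    (inv_mul_eq_one.mp (hx _ (by simp [AlgEquiv.mul_apply, h]))).symm
  have hint : IsIntegral K x := .of_finite K x
  have hm : (minpoly K x).map (algebraMap K L) ≠ 0 := map_ne_zero (minpoly.ne_zero hint)
  have hdvd : ∏ σ : Gal(L/K), (X - C (σ x)) ∣ (minpoly K x).map (algebraMap K L) := by
    have hprod : ∏ σ : Gal(L/K), (X - C (σ x))
        = ((Finset.univ.val.map fun σ : Gal(L/K) => σ x).map fun a => X - C a).prod := by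
      rw [Multiset.map_map]; rfl
    rw [hprod, Multiset.prod_X_sub_C_dvd_iff_le_roots hm,
      Multiset.le_iff_subset (Finset.univ.nodup.map hinj)]
    intro y hy
    obtain ⟨σ, -, rfl⟩ := Multiset.mem_map.mp hy
    rw [mem_roots hm, IsRoot, eval_map_algebraMap, aeval_algEquiv, AlgHom.comp_apply,
      minpoly.aeval, map_zero]
  refine eq_of_monic_of_dvd_of_natDegree_le (monic_prod_X_sub_C _ _)
    ((minpoly.monic hint).map _) hdvd ?_
  rw [natDegree_map, natDegree_finsetProd_X_sub_C_eq_card, Finset.card_univ,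
    ← Nat.card_eq_fintype_card, IsGalois.card_aut_eq_finrank]
  exact minpoly.natDegree_le x

lemma adjoin_simple_eq_top_of_forall_eq_one (hx : ∀ σ : Gal(L/K), σ x = x → σ = 1) :
    Algebra.adjoin K {x} = ⊤ := by
  have hint : IsIntegral K x := .of_finite K x
  refine Algebra.adjoin_eq_top_of_primitive_element hint.isAlgebraic
    (IntermediateField.eq_of_le_of_finrank_eq le_top ?_)
  rw [IntermediateField.finrank_top', IntermediateField.adjoin.finrank hint,
    ← natDegree_map (algebraMap K L), minpoly_map_eq_prod_of_forall_eq_one hx,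
    natDegree_finsetProd_X_sub_C_eq_card, Finset.card_univ, ← Nat.card_eq_fintype_card,
    IsGalois.card_aut_eq_finrank]

lemma eval_derivative_minpoly_map_eq_prod [DecidableEq Gal(L/K)]
    (hx : ∀ σ : Gal(L/K), σ x = x → σ = 1) :
    (derivative ((minpoly K x).map (algebraMap K L))).eval x
      = ∏ σ ∈ Finset.univ.erase (1 : Gal(L/K)), (x - σ x) := by
  rw [minpoly_map_eq_prod_of_forall_eq_one hx, ← Finset.mul_prod_erase _ _ (Finset.mem_univ 1),
    derivative_mul]
  simp [eval_prod]

end GaloisConjugates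

/-- For an enumeration `e` of `ι`, `θ = ∑ᵢ μ^(e i) xᵢ` works for every `μ ∈ A` whose residue avoids
the roots of the nonzero polynomials `∑ᵢ (xᵢ - τⱼ xᵢ) Xᵉ⁽ⁱ⁾` over `B ⧸ Q`. -/
lemma exists_forall_sub_algHom_notMem {A B : Type*} [CommRing A] [CommRing B] [Algebra A B]
    (Q : Ideal B) [Q.IsPrime] {ι J : Type*} [Fintype ι] [Fintype J] (x : ι → B)
    (τ : J → B →ₐ[A] B) (hτ : ∀ j, ∃ i, x i - τ j (x i) ∉ Q)
    (hinf : (Set.range ((Ideal.Quotient.mk Q).comp (algebraMap A B))).Infinite) :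
    ∃ θ : B, ∀ j, θ - τ j θ ∉ Q := by
  classical
  let e := Fintype.equivFin ι
  let q : J → (B ⧸ Q)[X] := fun j => ∑ i, monomial (e i) (Ideal.Quotient.mk Q (x i - τ j (x i)))
  have hq : ∀ j, q j ≠ 0 := by
    intro j hj
    obtain ⟨i, hi⟩ := hτ j
    have hcoeff : (q j).coeff (e i) = Ideal.Quotient.mk Q (x i - τ j (x i)) := by
      simp only [q, finsetSum_coeff, coeff_monomial, Fin.val_inj, e.apply_eq_iff_eq,
        Finset.sum_ite_eq', Finset.mem_univ, if_true]
    exact hi (Ideal.Quotient.eq_zero_iff_mem.mp (by rw [← hcoeff, hj, coeff_zero]))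
  obtain ⟨_, ⟨a, rfl⟩, ha⟩ :=
    hinf.exists_notMem_finset (∏ j, q j).roots.toFinset
  refine ⟨∑ i, algebraMap A B a ^ (e i : ℕ) * x i, fun j hj => ?_⟩
  have heval : Ideal.Quotient.mk Q (∑ i, algebraMap A B a ^ (e i : ℕ) * x i
      - τ j (∑ i, algebraMap A B a ^ (e i : ℕ) * x i))
      = (q j).eval (Ideal.Quotient.mk Q (algebraMap A B a)) := by
    simp [q, eval_finsetSum, ← Finset.sum_sub_distrib, mul_comm]
  refine ha (Multiset.mem_toFinset.mpr ((mem_roots (Finset.prod_ne_zero_iff.mpr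
    fun j _ => hq j)).mpr ?_))
  rw [IsRoot, eval_prod]
  exact Finset.prod_eq_zero (Finset.mem_univ j)
    (by rw [RingHom.comp_apply, ← heval, Ideal.Quotient.eq_zero_iff_mem]; exact hj)

lemma algebraMap_injective_of_isFractionRing (K L : Type*) {A B : Type*} [CommRing A]
    [CommRing B] [Field K] [Field L] [Algebra A K] [IsFractionRing A K] [Algebra K L]
    [Algebra A L] [IsScalarTower A K L] [Algebra A B] [Algebra B L] [IsScalarTower A B L] :
    Function.Injective (algebraMap A B) := by
  refine Function.Injective.of_comp (f := algebraMap B L) ?_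
  rw [← RingHom.coe_comp, ← IsScalarTower.algebraMap_eq, IsScalarTower.algebraMap_eq A K L]
  exact (algebraMap K L).injective.comp (IsFractionRing.injective A K)

section IntegralClosure

variable {A K L B : Type*} [CommRing A] [Field K] [Algebra A K]
  [IsFractionRing A K] [Field L] [Algebra K L] [Algebra A L] [IsScalarTower A K L]
  [FiniteDimensional K L] [CommRing B] [Algebra A B] [Algebra B L] [IsScalarTower A B L]
  [IsIntegralClosure B A L]

lemma exists_isRoot_sub_galRestrict_notMem {Φ : A[X]} (hΦ : Φ.Monic)
    [IsSplittingField K L (Φ.map (algebraMap A K))] (Q : Ideal B)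
    (hdist : ∀ x y, (Φ.map (algebraMap A B)).IsRoot x → (Φ.map (algebraMap A B)).IsRoot y →
      x - y ∈ Q → x = y)
    {σ : Gal(L/K)} (hσ : σ ≠ 1) :
    ∃ x, (Φ.map (algebraMap A B)).IsRoot x ∧ x - galRestrict A K L B σ x ∉ Q := by
  by_contra! h
  have hinj := IsIntegralClosure.algebraMap_injective B A L
  have hroot : ∀ x, (Φ.map (algebraMap A B)).IsRoot x ↔ aeval (algebraMap B L x) Φ = 0 := by
    intro x
    rw [IsRoot, eval_map_algebraMap, aeval_algebraMap_apply, map_eq_zero_iff _ hinj]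
  have hfix : Set.EqOn σ.toAlgHom (AlgHom.id K L) ((Φ.map (algebraMap A K)).rootSet L) := by
    intro y hy
    rw [mem_rootSet', aeval_map_algebraMap] at hy
    have hint : IsIntegral A y := ⟨Φ, hΦ, by rw [← aeval_def]; exact hy.2⟩
    obtain hx := IsIntegralClosure.algebraMap_mk' B y hint
    set x := IsIntegralClosure.mk' B y hint
    have hxroot : (Φ.map (algebraMap A B)).IsRoot x := (hroot x).mpr (hx ▸ hy.2)
    have hσx : (Φ.map (algebraMap A B)).IsRoot (galRestrict A K L B σ x) := by
      rw [hroot, algebraMap_galRestrict_apply, ← aeval_map_algebraMap K, aeval_algEquiv,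
        AlgHom.comp_apply, aeval_map_algebraMap, (hroot x).mp hxroot, map_zero]
    show σ y = y
    rw [← hx, ← algebraMap_galRestrict_apply A, ← hdist x _ hxroot hσx (h x hxroot)]
  exact hσ (AlgEquiv.ext fun y => DFunLike.congr_fun
    (AlgHom.ext_of_adjoin_eq_top (IsSplittingField.adjoin_rootSet L _) hfix) y)

variable [IsGalois K L]

lemma not_dvd_differentIdeal_of_sub_galRestrict_notMem [IsDomain A] [IsIntegrallyClosed A]
    [IsDedekindDomain B] [Module.IsTorsionFree A B] (Q : Ideal B) [Q.IsPrime] (θ : B)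
    (hθ : ∀ σ : Gal(L/K), σ ≠ 1 → θ - galRestrict A K L B σ θ ∉ Q) :
    ¬ Q ∣ differentIdeal A B := by
  classical
  have hinj := IsIntegralClosure.algebraMap_injective B A L
  have hθ' : ∀ σ : Gal(L/K), σ (algebraMap B L θ) = algebraMap B L θ → σ = 1 := by
    intro σ hσ
    by_contra hσ1
    refine hθ σ hσ1 ?_
    have hfix : galRestrict A K L B σ θ = θ := hinj (by rw [algebraMap_galRestrict_apply, hσ])
    rw [hfix, sub_self]
    exact Q.zero_mem
  have hdiff := aeval_derivative_mem_differentIdeal A K L θ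
    (adjoin_simple_eq_top_of_forall_eq_one hθ')
  have hprod : aeval θ (derivative (minpoly A θ))
      = ∏ σ ∈ Finset.univ.erase (1 : Gal(L/K)), (θ - galRestrict A K L B σ θ) := by
    apply hinj
    rw [map_prod]
    simp_rw [map_sub, algebraMap_galRestrict_apply]
    rw [← eval_derivative_minpoly_map_eq_prod hθ', minpoly.isIntegrallyClosed_eq_field_fractions K L
      (IsIntegralClosure.isIntegral A L θ), Polynomial.map_map, ← IsScalarTower.algebraMap_eq,
      ← aeval_algebraMap_apply, derivative_map, eval_map_algebraMap]
  intro hQ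
  obtain ⟨σ, hσ, hσQ⟩ := Ideal.IsPrime.prod_mem_iff.mp
    (hprod ▸ Ideal.le_of_dvd hQ hdiff :)
  exact hθ σ (Finset.ne_of_mem_erase hσ) hσQ

lemma not_sq_dvd_map_of_sub_galRestrict_notMem [IsDedekindDomain A] [IsDomain B]
    {p : Ideal A} [p.IsMaximal] (hp : p ≠ ⊥) (Q : Ideal B) [Q.IsPrime] (θ : B)
    (hθ : ∀ σ : Gal(L/K), σ ≠ 1 → θ - galRestrict A K L B σ θ ∉ Q) :
    ¬ Q ^ 2 ∣ p.map (algebraMap A B) := by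
  have := IsIntegralClosure.isDedekindDomain A K L B
  have : Module.IsTorsionFree A B :=
    Module.isTorsionFree_iff_algebraMap_injective.mpr (algebraMap_injective_of_isFractionRing K L)
  have := IsIntegralClosure.finite A K L B
  have := IsIntegralClosure.isFractionRing_of_finite_extension A K L B
  let := FractionRing.liftAlgebra A (FractionRing B)
  have : Algebra.IsSeparable (FractionRing A) (FractionRing B) :=
    Algebra.IsSeparable.of_equiv_equiv (FractionRing.algEquiv A K).symm.toRingEquiv
      (FractionRing.algEquiv B L).symm.toRingEquiv <| by
        ext; exact IsFractionRing.algEquiv_commutes (FractionRing.algEquiv A K).symm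
          (FractionRing.algEquiv B L).symm _
  intro h
  exact not_dvd_differentIdeal_of_sub_galRestrict_notMem Q θ hθ
    (by simpa using pow_sub_one_dvd_differentIdeal A Q 2 hp h)

end IntegralClosure

section Dynamics

variable {κ L B : Type*} [Field κ] [Field L] [Algebra (RatFunc κ) L] [Algebra κ[X] L]
  [IsScalarTower κ[X] (RatFunc κ) L] [CommRing B] [IsDomain B] [Algebra κ[X] B] [Algebra B L]
  [IsScalarTower κ[X] B L] [IsIntegralClosure B κ[X] L] (γ c : κ[X])

theorem not_sq_dvd_map_span_of_not_dvd_eval_polyIterate [Infinite κ] (h2 : (2 : κ) ≠ 0)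
    {n : ℕ} [IsSplittingField (RatFunc κ) L
      ((polyIterate ((X - C γ) ^ 2 - C c) n).map (algebraMap κ[X] (RatFunc κ)))]
    (hsep : ((polyIterate ((X - C γ) ^ 2 - C c) n).map (algebraMap κ[X] (RatFunc κ))).Separable)
    {f : κ[X]} (hf : Irreducible f)
    (hprim : ∀ m, 1 ≤ m → m ≤ n → ¬ f ∣ (polyIterate ((X - C γ) ^ 2 - C c) m).eval γ)
    (Q : Ideal B) [Q.IsPrime] (hQ : Q.comap (algebraMap κ[X] B) = Ideal.span {f}) :
    ¬ Q ^ 2 ∣ (Ideal.span {f}).map (algebraMap κ[X] B) := by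
  classical
  have := IsSplittingField.finiteDimensional L
    ((polyIterate ((X - C γ) ^ 2 - C c) n).map (algebraMap κ[X] (RatFunc κ)))
  have : IsGalois (RatFunc κ) L := IsGalois.of_separable_splitting_field hsep
  have hmemQ : ∀ a, algebraMap κ[X] B a ∈ Q ↔ f ∣ a := fun a => by
    rw [← Ideal.mem_comap, hQ, Ideal.mem_span_singleton]
  have h2Q : (2 : B) ∉ Q := by
    rw [← map_ofNat (algebraMap κ[X] B) 2, hmemQ]
    have h2u : IsUnit (2 : κ[X]) := by rw [← map_ofNat C 2]; exact isUnit_C.mpr h2.isUnit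
    exact fun h => hf.not_isUnit (isUnit_of_dvd_unit h h2u)
  have hdist := fun x y => eq_of_sub_mem_of_isRoot_polyIterate (x := x) (y := y) γ c Q h2Q
    fun m hm1 hmn => (hmemQ _).not.mpr (hprim m hm1 hmn)
  have hΦ := polyIterate_monic (monic_X_sub_C_sq_sub_C γ c)
    (by rw [natDegree_X_sub_C_sq_sub_C]; norm_num) n
  have hmove : ∀ σ : {σ : Gal(L/RatFunc κ) // σ ≠ 1},
      ∃ x : ((polyIterate ((X - C γ) ^ 2 - C c) n).map (algebraMap κ[X] B)).roots.toFinset,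
        x.1 - galRestrict κ[X] (RatFunc κ) L B σ.1 x.1 ∉ Q := fun σ => by
    obtain ⟨x, hx, hxσ⟩ := exists_isRoot_sub_galRestrict_notMem hΦ Q hdist σ.2
    exact ⟨⟨x, Multiset.mem_toFinset.mpr ((mem_roots (hΦ.map _).ne_zero).mpr hx)⟩, hxσ⟩
  have hinf : (Set.range ((Ideal.Quotient.mk Q).comp (algebraMap κ[X] B))).Infinite :=
    (Set.infinite_range_of_injective
      ((Ideal.Quotient.mk Q).comp ((algebraMap κ[X] B).comp C)).injective).mono
      (Set.range_comp_subset_range _ _)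
  obtain ⟨θ, hθ⟩ := exists_forall_sub_algHom_notMem Q _
    (fun σ : {σ : Gal(L/RatFunc κ) // σ ≠ 1} =>
      (galRestrict κ[X] (RatFunc κ) L B σ.1 : B →ₐ[κ[X]] B)) hmove hinf
  have := PrincipalIdealRing.isMaximal_of_irreducible hf
  exact not_sq_dvd_map_of_sub_galRestrict_notMem (K := RatFunc κ) (L := L)
    (by simpa using hf.ne_zero) Q θ fun σ hσ => hθ ⟨σ, hσ⟩

end Dynamics

theorem not_exists_sq_eq_of_not_dvd_eval_polyIterate {κ : Type*} [Field κ] [Infinite κ]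
    (h2 : (2 : κ) ≠ 0) (γ c : κ[X]) {n : ℕ}
    (hsep : ((polyIterate ((X - C γ) ^ 2 - C c) n).map (algebraMap κ[X] (RatFunc κ))).Separable)
    {f g : κ[X]} (hf : Irreducible f) (hcop : IsCoprime f g) (r : ℕ)
    (hprim : ∀ m, 1 ≤ m → m ≤ n → ¬ f ∣ (polyIterate ((X - C γ) ^ 2 - C c) m).eval γ) :
    ¬ ∃ s : ((polyIterate ((X - C γ) ^ 2 - C c) n).map
        (algebraMap κ[X] (RatFunc κ))).SplittingField,
      s ^ 2 = algebraMap (RatFunc κ) _ (algebraMap κ[X] (RatFunc κ) (f ^ (2 * r + 1) * g)) := by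
  set L := ((polyIterate ((X - C γ) ^ 2 - C c) n).map
    (algebraMap κ[X] (RatFunc κ))).SplittingField
  rintro ⟨s, hs⟩
  rw [← IsScalarTower.algebraMap_apply] at hs
  have : IsGalois (RatFunc κ) L := IsGalois.of_separable_splitting_field hsep
  let B := integralClosure κ[X] L
  have := IsIntegralClosure.isDedekindDomain κ[X] (RatFunc κ) L B
  have := PrincipalIdealRing.isMaximal_of_irreducible hf
  have hinj : Function.Injective (algebraMap κ[X] B) :=
    algebraMap_injective_of_isFractionRing (RatFunc κ) L
  obtain ⟨Q, hQmax, hQ⟩ := Ideal.exists_ideal_over_maximal_of_isIntegral (S := B)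
    (Ideal.span {f}) (by rw [(RingHom.injective_iff_ker_eq_bot _).mp hinj]; exact bot_le)
  have hmemQ : ∀ a, algebraMap κ[X] B a ∈ Q ↔ f ∣ a := fun a => by
    rw [← Ideal.mem_comap, hQ, Ideal.mem_span_singleton]
  have hQ0 : Q ≠ ⊥ := by
    rintro rfl
    exact hf.ne_zero ((map_eq_zero_iff _ hinj).mp (Ideal.mem_bot.mp ((hmemQ f).mpr dvd_rfl)))
  refine not_sq_dvd_map_span_of_not_dvd_eval_polyIterate (L := L) γ c h2 hsep hf hprim Q hQ ?_
  rw [Ideal.map_span, Set.image_singleton]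
  have hsB : IsIntegral κ[X] s := ⟨X ^ 2 - C (f ^ (2 * r + 1) * g),
    monic_X_pow_sub_C _ two_ne_zero, by simp [hs]⟩
  refine sq_dvd_span_of_mul_self_eq hQ0 ((hmemQ f).mpr dvd_rfl)
    (fun hg => hf.not_isUnit (hcop.isUnit_of_dvd' dvd_rfl ((hmemQ g).mp hg)))
    (s := ⟨s, hsB⟩) (r := r) (Subtype.ext ?_)
  show s * s = algebraMap κ[X] L f ^ (2 * r + 1) * algebraMap κ[X] L g
  rw [← sq, hs, map_mul, map_pow]

/-- `φ(γ) = -c₁`, so the first term of the adjusted orbit is `φ⁽¹⁾(γ)` only up to sign. -/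
lemma associated_eval_polyIterate_of_orbit {R : Type*} [CommRing R] (γ c₁ : R) (c : ℕ → R)
    (hc1 : c 1 = c₁) (hcn : ∀ m, 2 ≤ m → c m = (fun x => (x - γ) ^ 2 - c₁)^[m] γ) {m : ℕ}
    (hm : 1 ≤ m) : Associated (c m) ((polyIterate ((X - C γ) ^ 2 - C c₁) m).eval γ) := by
  have heval : (fun x => ((X - C γ) ^ 2 - C c₁).eval x) = fun x => (x - γ) ^ 2 - c₁ := by
    funext x; simp
  rw [eval_polyIterate, heval]
  rcases hm.eq_or_lt with rfl | hm2
  · simp [hc1]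
  · rw [hcn m hm2]

theorem stmt_8_general {k : Type*} [Field k] (hchar : (2 : k) ≠ 0)
    (γ c₁ : Polynomial k)
    (φ : Polynomial (Polynomial k))
    (hφ : φ = (X - C γ) ^ 2 - C c₁)
    (c : ℕ → Polynomial k)
    (hc1 : c 1 = c₁)
    (hcn : ∀ m, 2 ≤ m → c m = (fun x => (x - γ) ^ 2 - c₁)^[m] γ)
    -- the coefficient maps  k[t] → k^sep[t]  and  k[t] → k^sep(t)
    (ι : Polynomial k →+* Polynomial ↥(separableClosure k (AlgebraicClosure k)))
    (Ψ : Polynomial k →+* RatFunc ↥(separableClosure k (AlgebraicClosure k)))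
    (hΨ : Ψ = (algebraMap (Polynomial ↥(separableClosure k (AlgebraicClosure k)))
      (RatFunc ↥(separableClosure k (AlgebraicClosure k)))).comp ι)
    (hsep : ∀ m, 1 ≤ m → ((polyIterate φ m).map Ψ).Separable)
    (n : ℕ) (hn : 1 ≤ n)
    (f g : Polynomial ↥(separableClosure k (AlgebraicClosure k)))
    (hf : Irreducible f) (r : ℕ)
    (hfac : ι (c (n + 1)) = f ^ (2 * r + 1) * g)
    (hcop : IsCoprime f g)
    (hprim : ∀ i, 1 ≤ i → i ≤ n → ι (c i) ≠ 0 → ¬ f ∣ ι (c i)) :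
    ¬ ∃ s : ((polyIterate φ n).map Ψ).SplittingField,
        s ^ 2 = algebraMap (RatFunc ↥(separableClosure k (AlgebraicClosure k)))
          ((polyIterate φ n).map Ψ).SplittingField (Ψ (c (n + 1))) := by
  have : IsSepClosed (separableClosure k (AlgebraicClosure k)) :=
    (separableClosure.isSepClosure k (AlgebraicClosure k)).sep_closed
  have := infinite_of_isSepClosed (separableClosure k (AlgebraicClosure k))
  have h2 : (2 : separableClosure k (AlgebraicClosure k)) ≠ 0 := by
    rwa [← map_ofNat (algebraMap k _), _root_.map_ne_zero]
  have hψ : φ.map ι = (X - C (ι γ)) ^ 2 - C (ι c₁) := by simp [hφ]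
  have hmap : ∀ m, (polyIterate φ m).map Ψ = (polyIterate (φ.map ι) m).map (algebraMap _ _) :=
    fun m => by rw [hΨ, ← Polynomial.map_map, polyIterate_map]
  have horbit : ∀ m, 1 ≤ m → Associated (ι (c m)) ((polyIterate (φ.map ι) m).eval (ι γ)) :=
    fun m hm => by
      rw [← polyIterate_map, eval_map_apply, hφ]
      exact (associated_eval_polyIterate_of_orbit γ c₁ c hc1 hcn hm).map ι
  rw [hmap, hΨ, RingHom.comp_apply, hfac]
  rw [hψ] at hmap horbit ⊢
  refine not_exists_sq_eq_of_not_dvd_eval_polyIterate h2 _ _ (hmap n ▸ hsep n hn) hf hcop r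
    fun m hm1 hmn => (horbit m hm1).dvd_iff_dvd_right.not.mp <| hprim m hm1 hmn <|
      (horbit m hm1).ne_zero_iff.mpr <| eval_polyIterate_quadratic_ne_zero_of_separable _ _ _ hm1
        (hmap m ▸ hsep m hm1)

/-- Let `k` be a field of characteristic ≠ 2, `φ ∈ k[t][x]` a monic quadratic
polynomial with all iterates separable, and `n ≥ 1` such that `φ⁽ⁿ⁾` is irreducible over
`k^sep(t)`.  If `c_{n+1}` has a primitive prime divisor `f ∈ k^sep[t]` appearing to odd
multiplicity (`c_{n+1} = f^(2r+1)·g`, `f` irreducible, `gcd(f,g) = 1`, `f ∤ cᵢ` for all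
`1 ≤ i ≤ n` with `cᵢ ≠ 0`), then `c_{n+1}` is not a square in `K_n`, the splitting field of
`φ⁽ⁿ⁾` over `k^sep(t)`. -/
theorem stmt_8 {k : Type*} [Field k] (hchar : (2 : k) ≠ 0)
    (γ c₁ : Polynomial k)
    (φ : Polynomial (Polynomial k))
    (hφ : φ = (X - C γ) ^ 2 - C c₁)
    (c : ℕ → Polynomial k)
    (hc1 : c 1 = c₁)
    (hcn : ∀ m, 2 ≤ m → c m = (fun x => (x - γ) ^ 2 - c₁)^[m] γ)
    -- the coefficient maps  k[t] → k^sep[t]  and  k[t] → k^sep(t)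
    (ι : Polynomial k →+* Polynomial ↥(separableClosure k (AlgebraicClosure k)))
    (hι : ι = Polynomial.mapRingHom
      (algebraMap k ↥(separableClosure k (AlgebraicClosure k))))
    (Ψ : Polynomial k →+* RatFunc ↥(separableClosure k (AlgebraicClosure k)))
    (hΨ : Ψ = (algebraMap (Polynomial ↥(separableClosure k (AlgebraicClosure k)))
      (RatFunc ↥(separableClosure k (AlgebraicClosure k)))).comp ι)
    (hsep : ∀ m, 1 ≤ m → ((polyIterate φ m).map Ψ).Separable)
    (n : ℕ) (hn : 1 ≤ n)
    (hirr : Irreducible ((polyIterate φ n).map Ψ))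
    (f g : Polynomial ↥(separableClosure k (AlgebraicClosure k)))
    (hf : Irreducible f) (r : ℕ)
    (hfac : ι (c (n + 1)) = f ^ (2 * r + 1) * g)
    (hcop : IsCoprime f g)
    (hprim : ∀ i, 1 ≤ i → i ≤ n → ι (c i) ≠ 0 → ¬ f ∣ ι (c i)) :
    ¬ ∃ s : ((polyIterate φ n).map Ψ).SplittingField,
        s ^ 2 = algebraMap (RatFunc ↥(separableClosure k (AlgebraicClosure k)))
          ((polyIterate φ n).map Ψ).SplittingField (Ψ (c (n + 1))) :=
  stmt_8_general hchar γ c₁ φ hφ c hc1 hcn ι Ψ hΨ hsep n hn f g hf r hfac hcop hprim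
end

section
/- Let φ = x² + t ∈ ℤ[t][x] with adjusted post-critical orbit (cₙ) in ℤ[t]. Let I ⊆ {1,…,n} be nonempty and let d_I ∈ ℤ[t] be the squarefree part (in ℚ[t]) of ∏_{i∈I} cᵢ. Suppose p is an odd prime such that ∏_{i∈I} cᵢ mod p is a square in 𝔽̄_p[t]. Then d_I has positive degree and p divides disc(d_I). -/
/-!
Everything runs through the integer resultant `Res(f, f')`: for monic `f` over a ring `R` and any
map `φ : R → L` into an algebraically closed field, `discUpToSign (f.map φ) = φ (Res(f, f'))`.
So the discriminant of `d` is an integer `m` whose reduction mod `p` is the discriminant of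
`d mod p`.

Since `cᵢ' ≡ 1 mod 2`, `Res(cᵢ, cᵢ')` is odd and every `cᵢ` has simple roots over `ℚ̄`. For
`M = max I`, the `2^(M-1)` roots of `c_M` cannot all be roots of the product of the other `cᵢ`,
which has degree `< 2^(M-1)`; at a remaining root `∏ cᵢ` has a simple zero, so it is not a square
and `d ≠ 1`.

By Gauss's lemma `∏ cᵢ = d z²` in `ℤ[t]`. If this is a square mod `p`, every root of `d mod p`
has even multiplicity, hence is a root of `d'`, and so `p ∣ m`.
-/

open Polynomial

/-- The discriminant, up to sign, of a monic polynomial `f`: the product of the values of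
`f'` at the roots of `f` (in an algebraically closed field).  For a monic polynomial this
equals `± disc f`. -/
noncomputable def discUpToSign {L : Type*} [Field L] (f : Polynomial L) : L :=
  (f.roots.map (fun r => (derivative f).eval r)).prod

section Discriminant

variable {L : Type*} [Field L]

theorem discUpToSign_map_of_monic [IsAlgClosed L] {R : Type*} [CommRing R] (φ : R →+* L)
    {f : R[X]} (hf : f.Monic) :
    discUpToSign (f.map φ) = φ (resultant f (derivative f) f.natDegree f.natDegree) := by
  have hdeg : (derivative (f.map φ)).natDegree ≤ (f.map φ).natDegree :=
    (natDegree_derivative_le _).trans (Nat.sub_le _ _)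
  rw [← resultant_map_map, ← derivative_map, ← hf.natDegree_map φ,
    resultant_eq_prod_eval _ _ _ hdeg (IsAlgClosed.splits _), (hf.map φ).leadingCoeff, one_pow,
    one_mul, discUpToSign]

theorem discUpToSign_eq_zero_of_isRoot {f : L[X]} {t : L} (hf : f ≠ 0) (h₀ : f.IsRoot t)
    (h₁ : (derivative f).IsRoot t) : discUpToSign f = 0 :=
  Multiset.prod_eq_zero (Multiset.mem_map.mpr ⟨t, (mem_roots hf).mpr h₀, h₁⟩)

theorem nodup_roots_of_discUpToSign_ne_zero {f : L[X]} (h : discUpToSign f ≠ 0) :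
    f.roots.Nodup := by
  classical
  rcases eq_or_ne f 0 with rfl | hf
  · simp
  refine Multiset.nodup_iff_count_le_one.mpr fun t => ?_
  rw [count_roots]
  by_contra! hlt
  obtain ⟨h₀, h₁⟩ := (one_lt_rootMultiplicity_iff_isRoot hf).mp hlt
  exact h (discUpToSign_eq_zero_of_isRoot hf h₀ h₁)

end Discriminant

theorem isRoot_derivative_of_sq_eq_mul_sq {R : Type*} [CommRing R] [IsDomain R]
    {f s z : R[X]} {t : R} (hf : f ≠ 0) (hz : z ≠ 0) (h : s ^ 2 = f * z ^ 2) (ht : f.IsRoot t) :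
    (derivative f).IsRoot t := by
  have hfz : f * z ^ 2 ≠ 0 := mul_ne_zero hf (pow_ne_zero 2 hz)
  have hs : s ^ 2 ≠ 0 := h ▸ hfz
  have hmult := congrArg (rootMultiplicity t) h
  rw [rootMultiplicity_mul hfz, sq, sq, rootMultiplicity_mul (sq s ▸ hs),
    rootMultiplicity_mul (sq z ▸ pow_ne_zero 2 hz)] at hmult
  have hpos := (rootMultiplicity_pos hf).mpr ht
  exact ((one_lt_rootMultiplicity_iff_isRoot hf).mp (by omega)).2

theorem exists_isRoot_not_isRoot_of_natDegree_lt {L : Type*} [Field L] [IsAlgClosed L] {f g : L[X]}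
    (hf : f.roots.Nodup) (hg : g ≠ 0) (hlt : g.natDegree < f.natDegree) :
    ∃ t, f.IsRoot t ∧ ¬ g.IsRoot t := by
  have hf0 : f ≠ 0 := by rintro rfl; simp at hlt
  by_contra! hroots
  have hle : f.roots ≤ g.roots := (Multiset.le_iff_subset hf).mpr fun t ht =>
    (mem_roots hg).mpr (hroots t ((mem_roots hf0).mp ht))
  have := (Multiset.card_le_card hle).trans (card_roots' g)
  rw [IsAlgClosed.card_roots_eq_natDegree] at this
  omega

theorem exists_eq_mul_sq_of_map_eq_mul_sq {R K : Type*} [CommRing R] [IsDomain R]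
    [IsIntegrallyClosed R] [Field K] [Algebra R K] [IsFractionRing R K] {f d : R[X]}
    (hf : f.Monic) (hd : d.Monic) {y : K[X]}
    (h : f.map (algebraMap R K) = d.map (algebraMap R K) * y ^ 2) :
    ∃ z : R[X], f = d * z ^ 2 := by
  obtain ⟨z, hz⟩ := IsIntegrallyClosed.eq_map_mul_C_of_dvd K hf
    (show y ∣ f.map (algebraMap R K) from ⟨d.map (algebraMap R K) * y, by rw [h]; ring⟩)
  have hlc : y.leadingCoeff ^ 2 = 1 := by
    have := congrArg leadingCoeff h
    rwa [leadingCoeff_mul, leadingCoeff_pow, (hf.map _).leadingCoeff, (hd.map _).leadingCoeff,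
      one_mul, eq_comm] at this
  refine ⟨z, map_injective _ (IsFractionRing.injective R K) ?_⟩
  rw [h, Polynomial.map_mul, Polynomial.map_pow, ← hz, mul_pow, ← C_pow, hlc, C_1, mul_one]

noncomputable def critOrbit (m : ℕ) : ℤ[X] := (fun y => y ^ 2 + X)^[m] 0

theorem critOrbit_succ (m : ℕ) : critOrbit (m + 1) = critOrbit m ^ 2 + X :=
  Function.iterate_succ_apply' _ _ _

@[simp] theorem critOrbit_one : critOrbit 1 = X := by simp [critOrbit]

theorem natDegree_X_lt_natDegree_critOrbit_sq (m : ℕ) :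
    (X : ℤ[X]).natDegree < (critOrbit (m + 1) ^ 2).natDegree := by
  induction m with
  | zero => simp
  | succ m ih =>
    rw [natDegree_pow] at ih ⊢
    rw [critOrbit_succ (m + 1), natDegree_add_eq_left_of_natDegree_lt (by rwa [natDegree_pow]),
      natDegree_pow]
    omega

theorem natDegree_critOrbit_succ (m : ℕ) : (critOrbit (m + 1)).natDegree = 2 ^ m := by
  induction m with
  | zero => simp
  | succ m ih =>
    rw [critOrbit_succ,
      natDegree_add_eq_left_of_natDegree_lt (natDegree_X_lt_natDegree_critOrbit_sq m),
      natDegree_pow, ih, pow_succ, mul_comm]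

theorem monic_critOrbit {m : ℕ} (hm : m ≠ 0) : (critOrbit m).Monic := by
  obtain ⟨m, rfl⟩ := Nat.exists_eq_succ_of_ne_zero hm
  induction m with
  | zero => simp
  | succ m ih =>
    rw [critOrbit_succ]
    exact ((ih m.succ_ne_zero).pow 2).add_of_left
      (degree_lt_degree (natDegree_X_lt_natDegree_critOrbit_sq m))

theorem natDegree_critOrbit {m : ℕ} (hm : m ≠ 0) : (critOrbit m).natDegree = 2 ^ (m - 1) := by
  obtain ⟨m, rfl⟩ := Nat.exists_eq_succ_of_ne_zero hm
  exact natDegree_critOrbit_succ m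

theorem derivative_critOrbit_succ (m : ℕ) :
    derivative (critOrbit (m + 1)) = 1 + 2 * (critOrbit m * derivative (critOrbit m)) := by
  rw [critOrbit_succ, derivative_add, derivative_sq, derivative_X]
  simp only [map_ofNat]
  ring

theorem map_derivative_critOrbit_of_charP_two {k : Type*} [CommRing k] [CharP k 2] {m : ℕ}
    (hm : m ≠ 0) :
    (derivative (critOrbit m)).map (Int.castRingHom k) = 1 := by
  obtain ⟨m, rfl⟩ := Nat.exists_eq_succ_of_ne_zero hm
  simp [derivative_critOrbit_succ, CharTwo.two_eq_zero]

theorem discUpToSign_map_critOrbit_ne_zero {L : Type*} [Field L] [IsAlgClosed L] [CharZero L]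
    {m : ℕ} (hm : m ≠ 0) : discUpToSign ((critOrbit m).map (Int.castRingHom L)) ≠ 0 := by
  have hD : Int.castRingHom (AlgebraicClosure (ZMod 2))
      (resultant (critOrbit m) (derivative (critOrbit m)) (critOrbit m).natDegree
        (critOrbit m).natDegree) = 1 := by
    rw [← discUpToSign_map_of_monic _ (monic_critOrbit hm), discUpToSign, derivative_map,
      map_derivative_critOrbit_of_charP_two hm]
    simp
  rw [discUpToSign_map_of_monic _ (monic_critOrbit hm), eq_intCast, Int.cast_ne_zero]
  rintro h
  rw [h, map_zero] at hD
  exact zero_ne_one hD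

theorem natDegree_prod_critOrbit_lt {J : Finset ℕ} {M : ℕ} (hM : M ≠ 0)
    (hJ : J ⊆ Finset.Ico 1 M) : (∏ i ∈ J, critOrbit i).natDegree < (critOrbit M).natDegree := by
  have hJ' : ∀ i ∈ J, 1 ≤ i ∧ i < M := fun i hi => Finset.mem_Ico.mp (hJ hi)
  have hJ0 : ∀ i ∈ J, i ≠ 0 := fun i hi => Nat.one_le_iff_ne_zero.mp (hJ' i hi).1
  rw [natDegree_prod_of_monic _ _ fun i hi => monic_critOrbit (hJ0 i hi),
    Finset.sum_congr rfl fun i hi => natDegree_critOrbit (hJ0 i hi), natDegree_critOrbit hM,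
    ← Finset.sum_image (f := (2 ^ ·)) (g := (· - 1)) fun i hi j hj h => by
      have := hJ' i hi; have := hJ' j hj; simp only at h; omega]
  refine Nat.geomSum_lt le_rfl fun k hk => ?_
  obtain ⟨i, hi, rfl⟩ := Finset.mem_image.mp hk
  have := hJ' i hi
  omega

theorem not_isSquare_map_prod_critOrbit {L : Type*} [Field L] [IsAlgClosed L] [CharZero L]
    {I : Finset ℕ} (hI : 0 ∉ I) (hIne : I.Nonempty) :
    ¬ IsSquare ((∏ i ∈ I, critOrbit i).map (Int.castRingHom L)) := by
  rintro ⟨w, hw⟩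
  set φ := Int.castRingHom L
  set M := I.max' hIne
  have hMI : M ∈ I := I.max'_mem hIne
  have hM : M ≠ 0 := fun h => hI (h ▸ hMI)
  set G := ∏ i ∈ I.erase M, critOrbit i
  have hGmonic : G.Monic := monic_prod_of_monic _ _ fun i hi =>
    monic_critOrbit fun h => hI (h ▸ Finset.mem_of_mem_erase hi)
  have hsplit : (∏ i ∈ I, critOrbit i).map φ = (critOrbit M).map φ * G.map φ := by
    rw [← Finset.mul_prod_erase I _ hMI, Polynomial.map_mul]
  have hdisc := discUpToSign_map_critOrbit_ne_zero (L := L) hM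
  have hGM : G.natDegree < (critOrbit M).natDegree := natDegree_prod_critOrbit_lt hM fun i hi =>
    Finset.mem_Ico.mpr ⟨Nat.one_le_iff_ne_zero.mpr fun h => hI (h ▸ Finset.mem_of_mem_erase hi),
      lt_of_le_of_ne (I.le_max' i (Finset.mem_of_mem_erase hi)) (Finset.ne_of_mem_erase hi)⟩
  obtain ⟨t, ht, hGt⟩ := exists_isRoot_not_isRoot_of_natDegree_lt
    (nodup_roots_of_discUpToSign_ne_zero hdisc) (hGmonic.map φ).ne_zero
    (by rwa [hGmonic.natDegree_map, (monic_critOrbit hM).natDegree_map])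
  have hMt : eval t (derivative ((critOrbit M).map φ)) ≠ 0 := fun h =>
    hdisc (discUpToSign_eq_zero_of_isRoot ((monic_critOrbit hM).map φ).ne_zero ht h)
  have hFne : (∏ i ∈ I, critOrbit i).map φ ≠ 0 := by
    rw [hsplit]; exact mul_ne_zero ((monic_critOrbit hM).map φ).ne_zero (hGmonic.map φ).ne_zero
  have hroot := isRoot_derivative_of_sq_eq_mul_sq (s := w) hFne one_ne_zero
    (by rw [one_pow, mul_one, sq, hw]) (by rw [hsplit, IsRoot, eval_mul, ht.eq_zero, zero_mul])
  rw [hsplit, derivative_mul, IsRoot, eval_add, eval_mul, eval_mul, ht.eq_zero, zero_mul,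
    add_zero] at hroot
  exact mul_ne_zero hMt hGt hroot

theorem dvd_resultant_derivative_of_sq_eq_mul_sq {k : Type*} [Field k] [IsAlgClosed k] (p : ℕ)
    [CharP k p] {f : ℤ[X]} (hf : f.Monic) (hdeg : 0 < f.natDegree) {s z : k[X]} (hz : z ≠ 0)
    (h : s ^ 2 = f.map (Int.castRingHom k) * z ^ 2) :
    (p : ℤ) ∣ resultant f (derivative f) f.natDegree f.natDegree := by
  have hf' : f.map (Int.castRingHom k) ≠ 0 := (hf.map _).ne_zero
  obtain ⟨t, ht⟩ := IsAlgClosed.exists_root (f.map (Int.castRingHom k)) (by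
    rw [degree_eq_natDegree hf', hf.natDegree_map]; exact_mod_cast hdeg.ne')
  have hdisc := discUpToSign_eq_zero_of_isRoot hf' ht
    (isRoot_derivative_of_sq_eq_mul_sq hf' hz h ht)
  rw [discUpToSign_map_of_monic _ hf, eq_intCast] at hdisc
  exact (CharP.intCast_eq_zero_iff k p _).mp hdisc

theorem stmt_14_general (c : ℕ → Polynomial ℤ)
    (hc1 : c 1 = X)
    (hcn : ∀ m, 2 ≤ m → c m = (fun y => y ^ 2 + X)^[m] 0)
    (n : ℕ) (I : Finset ℕ) (hI : I ⊆ Finset.Icc 1 n) (hIne : I.Nonempty)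
    (d : Polynomial ℤ) (hmonic : d.Monic)
    (y : Polynomial ℚ)
    (hsfpart : (∏ i ∈ I, c i).map (Int.castRingHom ℚ) = d.map (Int.castRingHom ℚ) * y ^ 2)
    (p : ℕ) [Fact p.Prime]
    (hsquare : ∃ s : Polynomial (AlgebraicClosure (ZMod p)),
      s ^ 2 = (∏ i ∈ I, c i).map (Int.castRingHom (AlgebraicClosure (ZMod p)))) :
    0 < d.natDegree ∧
      ∃ m : ℤ, (m : AlgebraicClosure ℚ) =
          discUpToSign (d.map (Int.castRingHom (AlgebraicClosure ℚ))) ∧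
        (p : ℤ) ∣ m := by
  have hI0 : 0 ∉ I := fun h => by simpa using hI h
  have hc : ∏ i ∈ I, c i = ∏ i ∈ I, critOrbit i := Finset.prod_congr rfl fun i hi => by
    obtain h | h := (Finset.mem_Icc.mp (hI hi)).1.eq_or_lt
    · rw [← h, hc1, critOrbit_one]
    · exact hcn i h
  rw [hc, ← algebraMap_int_eq] at hsfpart
  rw [hc] at hsquare
  have hF : (∏ i ∈ I, critOrbit i).Monic :=
    monic_prod_of_monic _ _ fun i hi => monic_critOrbit fun h => hI0 (h ▸ hi)
  obtain ⟨z, hz⟩ := exists_eq_mul_sq_of_map_eq_mul_sq hF hmonic hsfpart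
  have hdeg : 0 < d.natDegree := by
    by_contra! h
    rw [Nat.le_zero, hmonic.natDegree_eq_zero] at h
    exact not_isSquare_map_prod_critOrbit (L := AlgebraicClosure ℚ) hI0 hIne
      ⟨z.map _, by rw [hz, h, one_mul, Polynomial.map_pow, sq]⟩
  obtain ⟨s, hs⟩ := hsquare
  refine ⟨hdeg, _, by rw [discUpToSign_map_of_monic _ hmonic, eq_intCast], ?_⟩
  refine dvd_resultant_derivative_of_sq_eq_mul_sq p hmonic hdeg (s := s)
    (z := z.map (Int.castRingHom _)) ?_ ?_
  · intro hz0
    apply (hF.map (Int.castRingHom (AlgebraicClosure (ZMod p)))).ne_zero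
    rw [hz, Polynomial.map_mul, Polynomial.map_pow, hz0, zero_pow two_ne_zero, mul_zero]
  · rw [hs, hz, Polynomial.map_mul, Polynomial.map_pow]

/-- Let `φ = x² + t ∈ ℤ[t][x]` with adjusted post-critical orbit `(cₙ)` in
`ℤ[t]`.  Let `I ⊆ {1,…,n}` be nonempty and `d_I ∈ ℤ[t]` be the (monic) squarefree part in
`ℚ[t]` of `∏_{i∈I} cᵢ`.  If `p` is an odd prime such that `∏_{i∈I} cᵢ mod p` is a square
in `𝔽̄_p[t]`, then `d_I` has positive degree and `p ∣ disc(d_I)` (the discriminant being an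
integer since `d_I` is monic, stated here up to sign via the product of `d_I'` over the
roots of `d_I`). -/
theorem stmt_14 (c : ℕ → Polynomial ℤ)
    (hc1 : c 1 = X)
    (hcn : ∀ m, 2 ≤ m → c m = (fun y => y ^ 2 + X)^[m] 0)
    (n : ℕ) (I : Finset ℕ) (hI : I ⊆ Finset.Icc 1 n) (hIne : I.Nonempty)
    (d : Polynomial ℤ) (hmonic : d.Monic)
    (y : Polynomial ℚ)
    (hsfpart : (∏ i ∈ I, c i).map (Int.castRingHom ℚ) = d.map (Int.castRingHom ℚ) * y ^ 2)
    (hsf : Squarefree (d.map (Int.castRingHom ℚ)))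
    (p : ℕ) [Fact p.Prime] (hodd : p ≠ 2)
    (hsquare : ∃ s : Polynomial (AlgebraicClosure (ZMod p)),
      s ^ 2 = (∏ i ∈ I, c i).map (Int.castRingHom (AlgebraicClosure (ZMod p)))) :
    0 < d.natDegree ∧
      ∃ m : ℤ, (m : AlgebraicClosure ℚ) =
          discUpToSign (d.map (Int.castRingHom (AlgebraicClosure ℚ))) ∧
        (p : ℤ) ∣ m :=
  stmt_14_general c hc1 hcn n I hI hIne d hmonic y hsfpart p hsquare
end

section
/- Let p be an odd prime, u ∈ 𝔽̄_p× a nonzero constant, c₁ ∈ 𝔽̄_p[t] a non-constant square, and γ = −c₁ − u√c₁. Let φ = (x−γ)² − c₁ with adjusted post-critical orbit (cₙ). Then for every n ≥ 3, cₙ/c₁ = √c₁·(√c₁·gₙ + 2u³) + u² − 1 for some gₙ ∈ 𝔽̄_p[t]. -/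
open Polynomial

/-! With `c₁ = r²` and `γ = -r² - u r`, every iterate from the third on is congruent to
`(u² - 1) r² + 2 u³ r³` modulo `r⁴`: the third iterate is `(u r + u² r²)² - r²`, and the map
`x ↦ (x - γ)² - r²` preserves this residue class, because for `x` in it `x - γ ≡ u r + u² r² + 2 u³ r³`,
whose square is `u² r² + 2 u³ r³` modulo `r⁴`. -/

section

variable {R : Type*} [CommRing R] (u r : R)

theorem pow_four_dvd_sq_sub_sub {x : R} (hx : r ^ 4 ∣ x - ((u ^ 2 - 1) * r ^ 2 + 2 * u ^ 3 * r ^ 3)) :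
    r ^ 4 ∣ ((x - (-r ^ 2 - u * r)) ^ 2 - r ^ 2) - ((u ^ 2 - 1) * r ^ 2 + 2 * u ^ 3 * r ^ 3) := by
  obtain ⟨g, hg⟩ := hx
  exact ⟨u ^ 4 + 2 * (u + u ^ 2 * r) * (2 * u ^ 3 + r * g) + r ^ 2 * (2 * u ^ 3 + r * g) ^ 2, by
    linear_combination (x - (-r ^ 2 - u * r) + (u * r + u ^ 2 * r ^ 2 + 2 * u ^ 3 * r ^ 3 + r ^ 4 * g)) * hg⟩

theorem pow_four_dvd_iterate_sub {n : ℕ} (hn : 3 ≤ n) :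
    r ^ 4 ∣ (fun x => (x - (-r ^ 2 - u * r)) ^ 2 - r ^ 2)^[n] (-r ^ 2 - u * r)
      - ((u ^ 2 - 1) * r ^ 2 + 2 * u ^ 3 * r ^ 3) := by
  induction n, hn using Nat.le_induction with
  | base => exact ⟨u ^ 4, by simp only [Function.iterate_succ, Function.iterate_zero,
      Function.comp_apply, id_eq]; ring⟩
  | succ n _ ih =>
    rw [Function.iterate_succ_apply']
    exact pow_four_dvd_sq_sub_sub u r ih

end

theorem stmt_15_general (p : ℕ) [Fact p.Prime]
    (u : AlgebraicClosure (ZMod p))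
    (r c₁ : Polynomial (AlgebraicClosure (ZMod p)))
    (hr : r ^ 2 = c₁)
    (γ : Polynomial (AlgebraicClosure (ZMod p)))
    (hγ : γ = -c₁ - C u * r)
    (c : ℕ → Polynomial (AlgebraicClosure (ZMod p)))
    (hcn : ∀ n, 2 ≤ n → c n = (fun x => (x - γ) ^ 2 - c₁)^[n] γ) :
    ∀ n, 3 ≤ n → ∃ g : Polynomial (AlgebraicClosure (ZMod p)),
      c n = c₁ * (r * (r * g + C (2 * u ^ 3)) + C (u ^ 2 - 1)) := by
  intro n hn
  subst hr hγ
  obtain ⟨g, hg⟩ := pow_four_dvd_iterate_sub (C u) r hn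
  refine ⟨g, ?_⟩
  rw [hcn n (by omega)]
  simp only [map_mul, map_pow, map_sub, map_one, map_ofNat]
  linear_combination hg

/-- Let `p` be an odd prime, `u ∈ 𝔽̄_p×`, `c₁ ∈ 𝔽̄_p[t]` a non-constant square
with fixed polynomial square root `r` (`r² = c₁`), and `γ = -c₁ - u·r`.  For
`φ = (x - γ)² - c₁` with adjusted post-critical orbit `(cₙ)`, for every `n ≥ 3` one has
`cₙ / c₁ = r·(r·gₙ + 2u³) + (u² - 1)` for some `gₙ ∈ 𝔽̄_p[t]` (stated multiplied through
by `c₁`). -/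
theorem stmt_15 (p : ℕ) [Fact p.Prime] (hodd : p ≠ 2)
    (u : AlgebraicClosure (ZMod p)) (hu : u ≠ 0)
    (r c₁ : Polynomial (AlgebraicClosure (ZMod p)))
    (hr : r ^ 2 = c₁) (hconst : 0 < c₁.natDegree)
    (γ : Polynomial (AlgebraicClosure (ZMod p)))
    (hγ : γ = -c₁ - C u * r)
    (c : ℕ → Polynomial (AlgebraicClosure (ZMod p)))
    (hc1 : c 1 = c₁)
    (hcn : ∀ n, 2 ≤ n → c n = (fun x => (x - γ) ^ 2 - c₁)^[n] γ) :
    ∀ n, 3 ≤ n → ∃ g : Polynomial (AlgebraicClosure (ZMod p)),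
      c n = c₁ * (r * (r * g + C (2 * u ^ 3)) + C (u ^ 2 - 1)) :=
  stmt_15_general p u r c₁ hr γ hγ c hcn
end
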